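/- arXiv:1811.02366 — 4 statements merged into one kernel-verified Lean document; each statement's English description precedes it below -/
import Mathlib

section
/- Let < be an irreflexive, transitive, well-founded, and modular relation on a finite nonempty set Δ, and for x ∈ Δ let k(x) be the length of the longest chain x_0 < x_1 < ... < x descending from x to a minimal element x_0. Then for all x, y ∈ Δ: x < y if and only if k(x) < k(y). -/
/-!
A chain to `x` extended by `x < y` is a chain to `y`, so `x < y` forces `k x < k y`.
Conversely, let `c 0 < ⋯ < c (k y) = y` be a longest chain to `y` and `i = k x < k y`.
Its prefix shows `i ≤ k (c i)`, so `c i < x` is impossible, and modularity applied to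
`c i < c (i + 1)` gives `x < c (i + 1)`, whence `x < y` by transitivity along the chain.
-/

/-- There is a chain x_0 < x_1 < ... < x_m = x of length m from a minimal element x_0 to x. -/
def ChainTo {Δ : Type*} (lt : Δ → Δ → Prop) (m : ℕ) (x : Δ) : Prop :=
  ∃ c : ℕ → Δ, (∀ i < m, lt (c i) (c (i + 1))) ∧ c m = x ∧ (∀ z, ¬ lt z (c 0))

theorem Nat.rel_of_forall_rel_succ_of_lt_of_le {β : Type*} (r : β → β → Prop) [IsTrans β r]
    {f : ℕ → β} {m : ℕ} (h : ∀ n < m, r (f n) (f (n + 1))) ⦃a b : ℕ⦄ (hab : a < b)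
    (hbm : b ≤ m) : r (f a) (f b) := by
  induction hab with
  | refl => exact h _ hbm
  | step _ ih => exact _root_.trans (ih (by omega)) (h _ hbm)

namespace ChainTo

variable {Δ : Type*} {lt : Δ → Δ → Prop}

theorem snoc {m : ℕ} {x y : Δ} (hx : ChainTo lt m x) (hxy : lt x y) : ChainTo lt (m + 1) y := by
  obtain ⟨c, hc, rfl, hmin⟩ := hx
  refine ⟨Function.update c (m + 1) y, fun i hi => ?_, by simp, by simpa using hmin⟩
  rcases Nat.lt_succ_iff_lt_or_eq.mp hi with hi | rfl
  · simpa [Function.update_of_ne (by omega : i ≠ m + 1),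
      Function.update_of_ne (by omega : i + 1 ≠ m + 1)] using hc i hi
  · simpa [Function.update_of_ne (by omega : i ≠ i + 1)] using hxy

def IsHeight (lt : Δ → Δ → Prop) (k : Δ → ℕ) : Prop :=
  ∀ x, ChainTo lt (k x) x ∧ ∀ m, ChainTo lt m x → m ≤ k x

variable {k : Δ → ℕ}

theorem height_lt_of_lt (hk : IsHeight lt k) {x y : Δ} (hxy : lt x y) : k x < k y :=
  (hk y).2 _ ((hk x).1.snoc hxy)

theorem lt_of_height_lt [IsTrans Δ lt] (hk : IsHeight lt k)
    (hmod : ∀ x y z, lt x y → lt x z ∨ lt z y) {x y : Δ} (hxy : k x < k y) : lt x y := by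
  obtain ⟨⟨c, hc, hcy, hmin⟩, -⟩ := hk y
  rw [← hcy]
  have hprefix : k x ≤ k (c (k x)) :=
    (hk _).2 _ ⟨c, fun j hj => hc j (by omega), rfl, hmin⟩
  have hnext : lt x (c (k x + 1)) :=
    (hmod _ _ x (hc _ hxy)).resolve_left fun h => (height_lt_of_lt hk h).not_ge hprefix
  rcases (Nat.succ_le_of_lt hxy).eq_or_lt with heq | hlt
  · rwa [← heq]
  · exact _root_.trans hnext (Nat.rel_of_forall_rel_succ_of_lt_of_le lt hc hlt le_rfl)

end ChainTo

theorem stmt_5_general {Δ : Type*} (lt : Δ → Δ → Prop)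
    (htrans : ∀ x y z, lt x y → lt y z → lt x z)
    (hmod : ∀ x y z, lt x y → lt x z ∨ lt z y)
    (k : Δ → ℕ)
    (hk : ∀ x, ChainTo lt (k x) x ∧ ∀ m, ChainTo lt m x → m ≤ k x) :
    ∀ x y, lt x y ↔ k x < k y := by
  have : IsTrans Δ lt := ⟨htrans⟩
  exact fun x y => ⟨ChainTo.height_lt_of_lt hk, ChainTo.lt_of_height_lt hk hmod⟩

/-- For an irreflexive, transitive, well-founded and modular relation on a finite
nonempty set, with k(x) the length of the longest chain descending from x to a
minimal element, we have x < y iff k(x) < k(y). -/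
theorem stmt_5 {Δ : Type*} [Fintype Δ] [Nonempty Δ] (lt : Δ → Δ → Prop)
    (hirr : ∀ x, ¬ lt x x)
    (htrans : ∀ x y z, lt x y → lt y z → lt x z)
    (hwf : ∀ S : Set Δ, S.Nonempty → ∃ x ∈ S, ∀ y ∈ S, ¬ lt y x)
    (hmod : ∀ x y z, lt x y → lt x z ∨ lt z y)
    (k : Δ → ℕ)
    (hk : ∀ x, ChainTo lt (k x) x ∧ ∀ m, ChainTo lt m x → m ≤ k x) :
    ∀ x y, lt x y ↔ k x < k y :=
  stmt_5_general lt htrans hmod k hk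
end

section
/- Let < be an irreflexive, transitive, well-founded, and modular relation on Δ and f(S) = Min_<(S). Then for all subsets S, R ⊆ Δ: if f(S) ⊆ R then f(S) = f(S ∩ R). -/
/-!
Minimality in `S` survives passing to the subset `S ∩ R`. Conversely, if `x` is minimal in
`S ∩ R` but some `y ∈ S` lies below it, well-foundedness and transitivity give a minimal
element of `S` below `x`; it lies in `R` by hypothesis, contradicting minimality of `x`.
-/

def typMin {Δ : Type*} (lt : Δ → Δ → Prop) (S : Set Δ) : Set Δ :=
  {x | x ∈ S ∧ ¬ ∃ y ∈ S, lt y x}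

section typMin

variable {Δ : Type*} (lt : Δ → Δ → Prop)

theorem typMin_subset (S : Set Δ) : typMin lt S ⊆ S := fun _ hx => hx.1

theorem typMin_inter_subset_typMin_of_subset {S T : Set Δ} (hTS : T ⊆ S) :
    typMin lt S ∩ T ⊆ typMin lt T := by
  rintro x ⟨⟨-, hmin⟩, hxT⟩
  exact ⟨hxT, fun ⟨y, hyT, hyx⟩ => hmin ⟨y, hTS hyT, hyx⟩⟩

variable {lt}

theorem exists_mem_typMin_lt
    (htrans : ∀ x y z, lt x y → lt y z → lt x z)
    (hwf : ∀ S : Set Δ, S.Nonempty → ∃ x ∈ S, ∀ y ∈ S, ¬ lt y x)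
    {S : Set Δ} {x y : Δ} (hyS : y ∈ S) (hyx : lt y x) :
    ∃ z ∈ typMin lt S, lt z x := by
  obtain ⟨z, ⟨hzS, hzx⟩, hzmin⟩ := hwf {w | w ∈ S ∧ lt w x} ⟨y, hyS, hyx⟩
  refine ⟨z, ⟨hzS, ?_⟩, hzx⟩
  rintro ⟨w, hwS, hwz⟩
  exact hzmin w ⟨hwS, htrans w z x hwz hzx⟩ hwz

theorem typMin_inter_subset_typMin
    (htrans : ∀ x y z, lt x y → lt y z → lt x z)
    (hwf : ∀ S : Set Δ, S.Nonempty → ∃ x ∈ S, ∀ y ∈ S, ¬ lt y x)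
    {S R : Set Δ} (hSR : typMin lt S ⊆ R) :
    typMin lt (S ∩ R) ⊆ typMin lt S := by
  rintro x ⟨⟨hxS, -⟩, hmin⟩
  refine ⟨hxS, fun ⟨y, hyS, hyx⟩ => ?_⟩
  obtain ⟨z, hz, hzx⟩ := exists_mem_typMin_lt htrans hwf hyS hyx
  exact hmin ⟨z, ⟨typMin_subset lt S hz, hSR hz⟩, hzx⟩

end typMin

theorem stmt_7_general {Δ : Type*} (lt : Δ → Δ → Prop)
    (htrans : ∀ x y z, lt x y → lt y z → lt x z)
    (hwf : ∀ S : Set Δ, S.Nonempty → ∃ x ∈ S, ∀ y ∈ S, ¬ lt y x) :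
    ∀ S R : Set Δ, typMin lt S ⊆ R → typMin lt S = typMin lt (S ∩ R) := by
  intro S R hSR
  refine Set.Subset.antisymm (fun x hx => ?_) (typMin_inter_subset_typMin htrans hwf hSR)
  exact typMin_inter_subset_typMin_of_subset lt Set.inter_subset_left ⟨hx, hx.1, hSR hx⟩

/-- (f_T-3): if f(S) ⊆ R then f(S) = f(S ∩ R). -/
theorem stmt_7 {Δ : Type*} (lt : Δ → Δ → Prop)
    (hirr : ∀ x, ¬ lt x x)
    (htrans : ∀ x y z, lt x y → lt y z → lt x z)
    (hwf : ∀ S : Set Δ, S.Nonempty → ∃ x ∈ S, ∀ y ∈ S, ¬ lt y x)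
    (hmod : ∀ x y z, lt x y → lt x z ∨ lt z y) :
    ∀ S R : Set Δ, typMin lt S ⊆ R → typMin lt S = typMin lt (S ∩ R) :=
  stmt_7_general lt htrans hwf
end

section
/- Let < be an irreflexive, transitive, well-founded, and modular relation on Δ and f(S) = Min_<(S). Then for all subsets S, R ⊆ Δ: if f(S) ∩ R ≠ ∅, then f(S ∩ R) ⊆ f(S). -/
theorem lt_of_lt_of_mem_typMin {Δ : Type*} {lt : Δ → Δ → Prop}
    (hmod : ∀ x y z, lt x y → lt x z ∨ lt z y) {S : Set Δ} {w x y : Δ}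
    (hw : w ∈ typMin lt S) (hy : y ∈ S) (hyx : lt y x) : lt w x :=
  (hmod y x w hyx).resolve_left fun hyw => hw.2 ⟨y, hy, hyw⟩

theorem stmt_10_general {Δ : Type*} (lt : Δ → Δ → Prop)
    (hmod : ∀ x y z, lt x y → lt x z ∨ lt z y) :
    ∀ S R : Set Δ, (typMin lt S ∩ R).Nonempty → typMin lt (S ∩ R) ⊆ typMin lt S := by
  rintro S R ⟨w, hw, hwR⟩ x ⟨⟨hxS, -⟩, hxmin⟩
  refine ⟨hxS, fun ⟨y, hyS, hyx⟩ => hxmin ⟨w, ⟨hw.1, hwR⟩, ?_⟩⟩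
  exact lt_of_lt_of_mem_typMin hmod hw hyS hyx

/-- (f_T-6), rational monotonicity: if f(S) ∩ R ≠ ∅ then f(S ∩ R) ⊆ f(S). -/
theorem stmt_10 {Δ : Type*} (lt : Δ → Δ → Prop)
    (hirr : ∀ x, ¬ lt x x)
    (htrans : ∀ x y z, lt x y → lt y z → lt x z)
    (hwf : ∀ S : Set Δ, S.Nonempty → ∃ x ∈ S, ∀ y ∈ S, ¬ lt y x)
    (hmod : ∀ x y z, lt x y → lt x z ∨ lt z y) :
    ∀ S R : Set Δ, (typMin lt S ∩ R).Nonempty → typMin lt (S ∩ R) ⊆ typMin lt S :=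
  stmt_10_general lt hmod
end

section
/- Let f(S) = Min_<(S) for an irreflexive, transitive, well-founded, modular relation < on Δ. Then for all S, R: f(S ∪ R) ⊆ f(S) ∪ f(R), and if f(S ∪ R) ∩ S ≠ ∅ then f(S) ⊆ f(S ∪ R). -/
section

variable {Δ : Type*} {lt : Δ → Δ → Prop} {S T : Set Δ} {x : Δ}

theorem mem_typMin_of_subset (hST : S ⊆ T) (hx : x ∈ typMin lt T) (hxS : x ∈ S) :
    x ∈ typMin lt S :=
  ⟨hxS, fun ⟨y, hy, hyx⟩ => hx.2 ⟨y, hST hy, hyx⟩⟩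

theorem typMin_union_subset (S R : Set Δ) :
    typMin lt (S ∪ R) ⊆ typMin lt S ∪ typMin lt R := by
  rintro x hx
  rcases hx.1 with hxS | hxR
  · exact Or.inl (mem_typMin_of_subset Set.subset_union_left hx hxS)
  · exact Or.inr (mem_typMin_of_subset Set.subset_union_right hx hxR)

theorem typMin_subset_typMin_of_modular (hmod : ∀ x y z, lt x y → lt x z ∨ lt z y)
    (hST : S ⊆ T) (hmeet : (typMin lt T ∩ S).Nonempty) : typMin lt S ⊆ typMin lt T := by
  obtain ⟨z, ⟨-, hzmin⟩, hzS⟩ := hmeet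
  rintro x ⟨hxS, hxmin⟩
  refine ⟨hST hxS, fun ⟨y, hyT, hyx⟩ => ?_⟩
  rcases hmod y x z hyx with hyz | hzx
  · exact hzmin ⟨y, hyT, hyz⟩
  · exact hxmin ⟨z, hzS, hzx⟩

end

theorem stmt_18_general {Δ : Type*} (lt : Δ → Δ → Prop)
    (hmod : ∀ x y z, lt x y → lt x z ∨ lt z y) :
    ∀ S R : Set Δ, typMin lt (S ∪ R) ⊆ typMin lt S ∪ typMin lt R ∧
      ((typMin lt (S ∪ R) ∩ S).Nonempty → typMin lt S ⊆ typMin lt (S ∪ R)) :=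
  fun S R => ⟨typMin_union_subset S R,
    typMin_subset_typMin_of_modular hmod Set.subset_union_left⟩

/-- f(S ∪ R) ⊆ f(S) ∪ f(R), and if f(S ∪ R) ∩ S ≠ ∅ then f(S) ⊆ f(S ∪ R). -/
theorem stmt_18 {Δ : Type*} (lt : Δ → Δ → Prop)
    (hirr : ∀ x, ¬ lt x x)
    (htrans : ∀ x y z, lt x y → lt y z → lt x z)
    (hwf : ∀ S : Set Δ, S.Nonempty → ∃ x ∈ S, ∀ y ∈ S, ¬ lt y x)
    (hmod : ∀ x y z, lt x y → lt x z ∨ lt z y) :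
    ∀ S R : Set Δ, typMin lt (S ∪ R) ⊆ typMin lt S ∪ typMin lt R ∧
      ((typMin lt (S ∪ R) ∩ S).Nonempty → typMin lt S ⊆ typMin lt (S ∪ R)) :=
  stmt_18_general lt hmod
end
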